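/- arXiv:1901.06642 — 3 statements merged into one kernel-verified Lean document; each statement's English description precedes it below -/
import Mathlib

section
/- Let f = h + conj(g) be a sense-preserving harmonic diffeomorphism of the upper half-plane U onto itself with f(i) = b, which extends continuously to the closed upper half-plane. Then Im f(z) = (Im b)·Im z for all z ∈ U, and there is a holomorphic function a : U → {Re w > 0} such that h'(z) = (a(z) + Im b)/2 and g'(z) = (a(z) − Im b)/2. -/
set_option autoImplicit false
open Complex Set

/-!
Since `Im f = Im (h - g)`, the holomorphic map `φ = h - g` sends the upper half-plane `𝕌` into
itself and `Im φ` has boundary values `0` on `ℝ`. Let `c` be the infimum of `Im φ z / Im z`. If it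
were not attained, `η = φ - c z` would again map `𝕌` into itself with `Im η z / Im z` arbitrarily
small; by Harnack's inequality (a consequence of Schwarz–Pick) this happens at points `R i` with
`R` large, and the maximum principle for `Im (η + A (1 / (z - R) + 1 / (z + R)))` on the half-disc
`{|z| < R, Im z > δ}` then makes `Im η i` arbitrarily small. Hence `Im (φ - c z) ≥ 0` vanishes
somewhere, so `φ - c z` is constant: `h' - g' = c = Im b`, and `a = h' + g'` has positive real part
because `|g'| < |h'| = |g' + c|`.
-/

open Metric
open scoped ComplexConjugate

local notation "𝕌" => Set.ofPred fun z : ℂ => 0 < Complex.im z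

theorem sq_norm_sub_conj (a w : ℂ) : ‖a - conj w‖ ^ 2 = ‖a - w‖ ^ 2 + 4 * (a.im * w.im) := by
  simp only [Complex.sq_norm, normSq_apply, sub_re, sub_im, conj_re, conj_im]
  ring

theorem sub_conj_ne_zero {a w : ℂ} (ha : 0 < a.im) (hw : 0 < w.im) : a - conj w ≠ 0 := by
  intro h
  have := congrArg im h
  simp only [sub_im, conj_im, sub_neg_eq_add, zero_im] at this
  linarith

noncomputable def halfPlaneToDisc (p z : ℂ) : ℂ := (z - p) / (z - conj p)

noncomputable def discToHalfPlane (p ζ : ℂ) : ℂ := (p - conj p * ζ) / (1 - ζ)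

theorem halfPlaneToDisc_self (p : ℂ) : halfPlaneToDisc p p = 0 := by
  simp [halfPlaneToDisc]

theorem discToHalfPlane_zero (p : ℂ) : discToHalfPlane p 0 = p := by
  simp [discToHalfPlane]

theorem norm_halfPlaneToDisc_lt_one {p z : ℂ} (hp : 0 < p.im) (hz : 0 < z.im) :
    ‖halfPlaneToDisc p z‖ < 1 := by
  rw [halfPlaneToDisc, norm_div, div_lt_one (norm_pos_iff.mpr (sub_conj_ne_zero hz hp))]
  refine lt_of_pow_lt_pow_left₀ 2 (norm_nonneg _) ?_
  rw [sq_norm_sub_conj]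
  nlinarith [mul_pos hz hp]

theorem sub_ne_zero_of_norm_lt_one {ζ : ℂ} (hζ : ‖ζ‖ < 1) : 1 - ζ ≠ 0 := by
  rw [sub_ne_zero]
  rintro rfl
  simp at hζ

theorem im_discToHalfPlane_pos {p ζ : ℂ} (hp : 0 < p.im) (hζ : ‖ζ‖ < 1) :
    0 < (discToHalfPlane p ζ).im := by
  have hnum : (p - conj p * ζ).im * (1 - ζ).re - (p - conj p * ζ).re * (1 - ζ).im
      = p.im * (1 - ‖ζ‖ ^ 2) := by
    simp only [Complex.sq_norm, normSq_apply, sub_re, sub_im, mul_re, mul_im, conj_re, conj_im,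
      one_re, one_im]
    ring
  rw [discToHalfPlane, div_im, div_sub_div_same, hnum]
  have : ‖ζ‖ ^ 2 < 1 := by nlinarith [norm_nonneg ζ]
  exact div_pos (by nlinarith) (normSq_pos.mpr (sub_ne_zero_of_norm_lt_one hζ))

theorem discToHalfPlane_halfPlaneToDisc {p z : ℂ} (hp : 0 < p.im) (hz : 0 < z.im) :
    discToHalfPlane p (halfPlaneToDisc p z) = z := by
  have hz' := sub_conj_ne_zero hz hp
  have hp' := sub_conj_ne_zero hp hp
  have h1 : 1 - halfPlaneToDisc p z ≠ 0 :=
    sub_ne_zero_of_norm_lt_one (norm_halfPlaneToDisc_lt_one hp hz)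
  rw [discToHalfPlane, div_eq_iff h1, halfPlaneToDisc]
  field_simp
  ring

theorem differentiableOn_halfPlaneToDisc {p : ℂ} (hp : 0 < p.im) :
    DifferentiableOn ℂ (halfPlaneToDisc p) 𝕌 :=
  (differentiableOn_id.sub_const _).div (differentiableOn_id.sub_const _)
    fun _ hz => sub_conj_ne_zero hz hp

theorem differentiableOn_discToHalfPlane (p : ℂ) :
    DifferentiableOn ℂ (discToHalfPlane p) (ball 0 1) :=
  ((differentiableOn_const _).sub (differentiableOn_id.const_mul _)).div
    ((differentiableOn_const _).sub differentiableOn_id)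
    fun _ hζ => sub_ne_zero_of_norm_lt_one (mem_ball_zero_iff.mp hζ)

section SchwarzPick

variable {φ : ℂ → ℂ} {z w : ℂ}

theorem norm_halfPlaneToDisc_le_of_mapsTo (hφ : DifferentiableOn ℂ φ 𝕌) (hmaps : MapsTo φ 𝕌 𝕌)
    (hz : 0 < z.im) (hw : 0 < w.im) :
    ‖halfPlaneToDisc (φ w) (φ z)‖ ≤ ‖halfPlaneToDisc w z‖ := by
  have hto : MapsTo (discToHalfPlane w) (ball 0 1) 𝕌 :=
    fun ζ hζ => im_discToHalfPlane_pos hw (mem_ball_zero_iff.mp hζ)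
  set ψ := halfPlaneToDisc (φ w) ∘ φ ∘ discToHalfPlane w
  have hψd : DifferentiableOn ℂ ψ (ball 0 1) :=
    (differentiableOn_halfPlaneToDisc (hmaps hw)).comp
      (hφ.comp (differentiableOn_discToHalfPlane w) hto) (hmaps.comp hto)
  have hψmaps : MapsTo ψ (ball 0 1) (closedBall 0 1) := fun ζ hζ =>
    mem_closedBall_zero_iff.mpr (norm_halfPlaneToDisc_lt_one (hmaps hw) (hmaps (hto hζ))).le
  have hψ0 : ψ 0 = 0 := by simp [ψ, discToHalfPlane_zero, halfPlaneToDisc_self]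
  simpa [ψ, discToHalfPlane_halfPlaneToDisc hw hz] using
    Complex.norm_le_norm_of_mapsTo_ball hψd hψmaps hψ0 (norm_halfPlaneToDisc_lt_one hw hz)

theorem sq_norm_sub_mul_im_le_of_mapsTo (hφ : DifferentiableOn ℂ φ 𝕌) (hmaps : MapsTo φ 𝕌 𝕌)
    (hz : 0 < z.im) (hw : 0 < w.im) :
    ‖φ z - φ w‖ ^ 2 * (z.im * w.im) ≤ ‖z - w‖ ^ 2 * ((φ z).im * (φ w).im) := by
  have hφz : 0 < (φ z).im := hmaps hz
  have hφw : 0 < (φ w).im := hmaps hw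
  have h := norm_halfPlaneToDisc_le_of_mapsTo hφ hmaps hz hw
  rw [halfPlaneToDisc, halfPlaneToDisc, norm_div, norm_div,
    div_le_div_iff₀ (norm_pos_iff.mpr (sub_conj_ne_zero hφz hφw))
      (norm_pos_iff.mpr (sub_conj_ne_zero hz hw))] at h
  have h2 := pow_le_pow_left₀ (by positivity) h 2
  rw [mul_pow, mul_pow, sq_norm_sub_conj, sq_norm_sub_conj] at h2
  linarith

theorem harnack (hφ : DifferentiableOn ℂ φ 𝕌) (hmaps : MapsTo φ 𝕌 𝕌)
    (hz : 0 < z.im) (hw : 0 < w.im) :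
    (φ w).im * (z.im * w.im) ≤ (φ z).im * (‖z - w‖ ^ 2 + 2 * (z.im * w.im)) := by
  have hφz : 0 < (φ z).im := hmaps hz
  have hφw : 0 < (φ w).im := hmaps hw
  have him : ((φ z).im - (φ w).im) ^ 2 ≤ ‖φ z - φ w‖ ^ 2 := by
    rw [← sub_im, ← sq_abs]
    exact pow_le_pow_left₀ (abs_nonneg _) (abs_im_le_norm _) 2
  have h := sq_norm_sub_mul_im_le_of_mapsTo hφ hmaps hz hw
  have hs := mul_pos hz hw
  refine le_of_mul_le_mul_left ?_ hφw
  nlinarith [mul_le_mul_of_nonneg_right him hs.le, mul_pos (mul_pos hφz hφz) hs]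

theorem harnack_imaginaryAxis (hφ : DifferentiableOn ℂ φ 𝕌) (hmaps : MapsTo φ 𝕌 𝕌)
    (hz : 0 < z.im) {y : ℝ} (hy : 0 < y) :
    (φ (y * I)).im * (z.im * y) ≤ (φ z).im * (‖z‖ ^ 2 + y ^ 2) := by
  have key := harnack hφ hmaps hz (w := y * I) (by simpa using hy)
  have hdist : ‖z - y * I‖ ^ 2 = ‖z‖ ^ 2 - 2 * y * z.im + y ^ 2 := by
    simp only [Complex.sq_norm, normSq_apply, sub_re, sub_im, mul_re, mul_im, ofReal_re,
      ofReal_im, I_re, I_im]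
    ring
  simp only [hdist, mul_im, ofReal_re, ofReal_im, I_re, I_im] at key
  nlinarith [key]

theorem harnack_sphere (hφ : DifferentiableOn ℂ φ 𝕌) (hmaps : MapsTo φ 𝕌 𝕌)
    (hw : 0 < w.im) {R : ℝ} (hR : 0 < R) (hwR : ‖w‖ = R) :
    (φ w).im * w.im ≤ 2 * R * (φ (R * I)).im := by
  have key := harnack hφ hmaps (z := R * I) (by simpa using hR) hw
  have hdist : ‖(R : ℂ) * I - w‖ ^ 2 = 2 * R ^ 2 - 2 * R * w.im := by
    have h := congrArg (· ^ 2) hwR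
    simp only [Complex.sq_norm, normSq_apply, sub_re, sub_im, mul_re, mul_im, ofReal_re,
      ofReal_im, I_re, I_im] at h ⊢
    nlinarith [h]
  simp only [hdist, mul_im, ofReal_re, ofReal_im, I_re, I_im] at key
  nlinarith [key, mul_pos hR hw, hmaps (show 0 < ((R : ℂ) * I).im by simpa using hR)]

theorem im_ofReal_mul_I_lt_of_im_lt (hφ : DifferentiableOn ℂ φ 𝕌) (hmaps : MapsTo φ 𝕌 𝕌)
    (hz : 0 < z.im) {ε : ℝ} (hε : (φ z).im < ε * z.im) {y : ℝ} (hy : 0 < y) (hzy : ‖z‖ ≤ y) :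
    (φ (y * I)).im < 2 * ε * y := by
  have key := harnack_imaginaryAxis hφ hmaps hz hy
  have hsq : ‖z‖ ^ 2 ≤ y ^ 2 := pow_le_pow_left₀ (norm_nonneg _) hzy 2
  have hφz : 0 < (φ z).im := hmaps hz
  refine lt_of_mul_lt_mul_right ?_ (mul_pos hz hy).le
  nlinarith [mul_le_mul_of_nonneg_left hsq hφz.le, mul_lt_mul_of_pos_right hε (pow_pos hy 2)]

end SchwarzPick

theorem im_le_of_forall_mem_frontier_im_le {G : ℂ → ℂ} {Ω : Set ℂ}
    (hΩ : Bornology.IsBounded Ω) (hG : DiffContOnCl ℂ G Ω) {C : ℝ}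
    (hC : ∀ z ∈ frontier Ω, (G z).im ≤ C) {z : ℂ} (hz : z ∈ closure Ω) : (G z).im ≤ C := by
  have hexp : Differentiable ℂ fun w : ℂ => exp (-(I * w)) := by fun_prop
  have h := Complex.norm_le_of_forall_mem_frontier_norm_le hΩ (hexp.comp_diffContOnCl hG)
    (C := Real.exp C) (fun w hw => by simpa [norm_exp] using hC w hw) hz
  simpa [norm_exp] using h

theorem deriv_eq_zero_of_isMinOn_im {η : ℂ → ℂ} {S : Set ℂ} {c z : ℂ} (hS : IsOpen S)
    (hS' : IsPreconnected S) (hη : DifferentiableOn ℂ η S) (hc : c ∈ S)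
    (hmin : IsMinOn (fun w => (η w).im) S c) (hz : z ∈ S) : deriv η z = 0 := by
  set W : ℂ → ℂ := fun w => exp (I * η w)
  have hnorm : ∀ w, ‖W w‖ = Real.exp (-(η w).im) := fun w => by simp [W, norm_exp]
  have hmax : IsMaxOn (norm ∘ W) S c := fun w hw => by
    simpa [hnorm] using hmin hw
  have hconst := Complex.eqOn_of_isPreconnected_of_isMaxOn_norm hS' hS
    (fun w hw => ((hη w hw).const_mul I).cexp) hc hmax
  have hW0 : deriv W z = 0 := by
    rw [(Filter.eventuallyEq_of_mem (hS.mem_nhds hz) hconst).deriv_eq]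
    exact deriv_const _ _
  have hηz := (hη.differentiableAt (hS.mem_nhds hz)).hasDerivAt
  rw [((hηz.const_mul I).cexp).deriv] at hW0
  simpa [exp_ne_zero, I_ne_zero] using hW0

noncomputable def halfDiscBarrier (R : ℝ) (z : ℂ) : ℂ := (z - R)⁻¹ + (z + R)⁻¹

theorem differentiableOn_halfDiscBarrier (R : ℝ) : DifferentiableOn ℂ (halfDiscBarrier R) 𝕌 := by
  have hne : ∀ z ∈ 𝕌, ∀ x : ℝ, z + x ≠ 0 := fun z hz x h => by
    have := congrArg im h
    simp only [add_im, ofReal_im, add_zero, zero_im] at this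
    exact hz.ne' this
  refine ((differentiableOn_id.sub_const _).inv fun z hz => ?_).add
    ((differentiableOn_id.add_const _).inv fun z hz => hne z hz R)
  simpa [sub_eq_add_neg] using hne z hz (-R)

theorem im_halfDiscBarrier_nonpos (R : ℝ) {z : ℂ} (hz : 0 ≤ z.im) :
    (halfDiscBarrier R z).im ≤ 0 := by
  simp only [halfDiscBarrier, add_im, inv_im, sub_im, ofReal_im, sub_zero, add_zero, neg_div]
  linarith [div_nonneg hz (normSq_nonneg (z - R)), div_nonneg hz (normSq_nonneg (z + R))]

theorem im_halfDiscBarrier_of_norm_eq {R : ℝ} {z : ℂ} (hz : 0 < z.im) (hzR : ‖z‖ = R) :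
    (halfDiscBarrier R z).im = -z.im⁻¹ := by
  have h := congrArg (· ^ 2) hzR
  simp only [Complex.sq_norm, normSq_apply] at h
  simp only [halfDiscBarrier, add_im, inv_im, sub_im, ofReal_im, sub_zero, add_zero, normSq_apply,
    sub_re, add_re, ofReal_re]
  have hlt : z.re ^ 2 < R ^ 2 := by nlinarith
  have hR : 0 < R := by rw [← hzR]; exact norm_pos_iff.mpr (fun h0 => by simp [h0] at hz)
  have h1 : 0 < R - z.re := by nlinarith [abs_lt_of_sq_lt_sq' hlt hR.le]
  have h2 : 0 < R + z.re := by nlinarith [abs_lt_of_sq_lt_sq' hlt hR.le]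
  field_simp
  nlinarith

theorem im_halfDiscBarrier_I (R : ℝ) : (halfDiscBarrier R I).im = -2 / (R ^ 2 + 1) := by
  simp only [halfDiscBarrier, add_im, inv_im, sub_im, ofReal_im, sub_zero, add_zero, normSq_apply,
    sub_re, add_re, ofReal_re, I_re, I_im]
  ring

theorem im_I_le_of_im_le_on_chord {η : ℂ → ℂ} (hη : DifferentiableOn ℂ η 𝕌)
    (hmaps : MapsTo η 𝕌 𝕌) {R δ σ : ℝ} (hR : 1 < R) (hδ : 0 < δ) (hδ1 : δ < 1) (hσ : 0 ≤ σ)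
    (hchord : ∀ z : ℂ, ‖z‖ ≤ R → z.im = δ → (η z).im ≤ σ) :
    (η I).im ≤ σ + 4 * (η (R * I)).im / R := by
  have hR0 : 0 < R := by linarith
  set v := (η (R * I)).im
  have hv : 0 < v := hmaps (show 0 < ((R : ℂ) * I).im by simpa using hR0)
  set A := 2 * R * v
  set G : ℂ → ℂ := fun z => η z + A * halfDiscBarrier R z
  have hGim : ∀ z, (G z).im = (η z).im + A * (halfDiscBarrier R z).im := fun z => by
    simp [G]
  set Ω : Set ℂ := {z | ‖z‖ < R ∧ δ < z.im}
  have hΩopen : IsOpen Ω :=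
    (isOpen_lt continuous_norm continuous_const).inter (isOpen_lt continuous_const continuous_im)
  have hΩbdd : Bornology.IsBounded Ω :=
    isBounded_ball.subset fun z hz => mem_ball_zero_iff.mpr hz.1
  have hcl : closure Ω ⊆ {z | ‖z‖ ≤ R ∧ δ ≤ z.im} :=
    closure_minimal (fun z hz => ⟨hz.1.le, hz.2.le⟩)
      ((isClosed_le continuous_norm continuous_const).inter
        (isClosed_le continuous_const continuous_im))
  have hclU : closure Ω ⊆ 𝕌 := fun z hz => hδ.trans_le (hcl hz).2
  have hG : DiffContOnCl ℂ G Ω :=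
    ((hη.add ((differentiableOn_halfDiscBarrier R).const_mul _)).mono hclU).diffContOnCl
  have hfront : ∀ z ∈ frontier Ω, (G z).im ≤ σ := by
    intro z hz
    rw [hΩopen.frontier_eq] at hz
    obtain ⟨hzR, hzδ⟩ := hcl hz.1
    have hz0 : 0 < z.im := hδ.trans_le hzδ
    rw [hGim]
    rcases hzR.lt_or_eq with hzR | hzR
    · have hzδ' : z.im = δ := le_antisymm (not_lt.mp fun h => hz.2 ⟨hzR, h⟩) hzδ
      have := mul_nonpos_of_nonneg_of_nonpos (by positivity : 0 ≤ A)
        (im_halfDiscBarrier_nonpos R hz0.le)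
      linarith [hchord z hzR.le hzδ']
    · -- on the arc the barrier contributes `-A / Im z`, which dominates `Im η` by Harnack
      rw [im_halfDiscBarrier_of_norm_eq hz0 hzR, mul_neg, ← div_eq_mul_inv]
      have := (le_div_iff₀ hz0).mpr (harnack_sphere hη hmaps hz0 hR0 hzR)
      linarith
  have hIΩ : I ∈ Ω := ⟨by simpa using hR, by simpa using hδ1⟩
  have hI := im_le_of_forall_mem_frontier_im_le hΩbdd hG hfront (subset_closure hIΩ)
  rw [hGim, im_halfDiscBarrier_I] at hI
  have hbound : A * (2 / (R ^ 2 + 1)) ≤ 4 * v / R := by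
    rw [← mul_div_assoc, div_le_div_iff₀ (by positivity) hR0]
    nlinarith
  rw [neg_div, mul_neg] at hI
  linarith

theorem exists_im_le_of_continuousOn {F : ℂ → ℂ} (hF : ContinuousOn F {z | 0 ≤ z.im})
    (hreal : ∀ x : ℝ, (F x).im = 0) (R : ℝ) {σ : ℝ} (hσ : 0 < σ) :
    ∃ δ, 0 < δ ∧ δ < 1 ∧ ∀ z : ℂ, ‖z‖ ≤ R → 0 ≤ z.im → z.im ≤ δ → (F z).im ≤ σ := by
  set K := closedBall (0 : ℂ) R ∩ {z | 0 ≤ z.im}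
  have hK : IsCompact K :=
    (isCompact_closedBall 0 R).inter_right (isClosed_le continuous_const continuous_im)
  obtain ⟨δ, hδ, hunif⟩ := Metric.uniformContinuousOn_iff.mp
    (hK.uniformContinuousOn_of_continuous (hF.mono inter_subset_right)) σ hσ
  refine ⟨min (δ / 2) (1 / 2), by positivity, (min_le_right _ _).trans_lt (by norm_num),
    fun z hzR hz0 hzδ => ?_⟩
  have hzK : z ∈ K := ⟨mem_closedBall_zero_iff.mpr hzR, hz0⟩
  have hxK : (z.re : ℂ) ∈ K :=
    ⟨mem_closedBall_zero_iff.mpr ((show ‖(z.re : ℂ)‖ ≤ ‖z‖ by simpa using abs_re_le_norm z).trans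
      hzR), by simp⟩
  have hdist : dist z z.re < δ := by
    rw [dist_of_re_eq (by simp), ofReal_im, Real.dist_eq, sub_zero, abs_of_nonneg hz0]
    linarith [min_le_left (δ / 2) (1 / 2)]
  have h := hunif z hzK z.re hxK hdist
  rw [dist_eq_norm] at h
  calc (F z).im = (F z - F z.re).im := by rw [sub_im, hreal, sub_zero]
    _ ≤ ‖F z - F z.re‖ := im_le_norm _
    _ ≤ σ := h.le

theorem exists_pos_mul_im_le {η F : ℂ → ℂ} (hη : DifferentiableOn ℂ η 𝕌) (hmaps : MapsTo η 𝕌 𝕌)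
    (hF : ContinuousOn F {z | 0 ≤ z.im}) (hreal : ∀ x : ℝ, (F x).im = 0)
    (hle : ∀ z ∈ 𝕌, (η z).im ≤ (F z).im) :
    ∃ ε > 0, ∀ z ∈ 𝕌, ε * z.im ≤ (η z).im := by
  set v := (η I).im
  have hv : 0 < v := hmaps (show 0 < I.im by simp)
  refine ⟨v / 16, by positivity, fun z hz => ?_⟩
  by_contra! hlt
  set y := max 2 ‖z‖
  have hy : 1 < y := by linarith [le_max_left 2 ‖z‖]
  have hηy := im_ofReal_mul_I_lt_of_im_lt hη hmaps hz hlt (by linarith) (le_max_right 2 ‖z‖)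
  obtain ⟨δ, hδ, hδ1, hFδ⟩ := exists_im_le_of_continuousOn hF hreal y (σ := v / 4) (by positivity)
  have hbar := im_I_le_of_im_le_on_chord hη hmaps hy hδ hδ1 (by positivity)
    fun w hwy hwδ =>
      (hle w (show 0 < w.im from hwδ ▸ hδ)).trans (hFδ w hwy (hwδ ▸ hδ.le) hwδ.le)
  have : 4 * (η (y * I)).im / y < v / 2 := by
    rw [div_lt_iff₀ (by linarith)]
    linarith
  linarith

theorem exists_mul_im_le_and_eq {φ F : ℂ → ℂ} (hφ : DifferentiableOn ℂ φ 𝕌)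
    (hmaps : MapsTo φ 𝕌 𝕌) (hF : ContinuousOn F {z | 0 ≤ z.im})
    (hreal : ∀ x : ℝ, (F x).im = 0) (hFφ : ∀ z ∈ 𝕌, (F z).im = (φ z).im) :
    ∃ c : ℝ, (∀ z ∈ 𝕌, c * z.im ≤ (φ z).im) ∧ ∃ z₁ ∈ 𝕌, (φ z₁).im = c * z₁.im := by
  have hratio : ∀ z : 𝕌, 0 ≤ (φ z).im / (z : ℂ).im := fun z =>
    div_nonneg (hmaps z.2).le z.2.le
  have : Nonempty 𝕌 := ⟨⟨I, by simp⟩⟩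
  set c := ⨅ z : 𝕌, (φ z).im / (z : ℂ).im
  have hbdd : BddBelow (range fun z : 𝕌 => (φ z).im / (z : ℂ).im) := ⟨0, by
    rintro _ ⟨z, rfl⟩; exact hratio z⟩
  have hc0 : 0 ≤ c := le_ciInf hratio
  have hcle : ∀ z ∈ 𝕌, c * z.im ≤ (φ z).im := fun z hz =>
    (le_div_iff₀ hz).mp (ciInf_le hbdd ⟨z, hz⟩)
  refine ⟨c, hcle, ?_⟩
  by_contra! hne
  have hη : DifferentiableOn ℂ (fun z => φ z - c * z) 𝕌 := hφ.sub (by fun_prop)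
  have hηim : ∀ z, (φ z - c * z).im = (φ z).im - c * z.im := fun z => by simp
  have hηmaps : MapsTo (fun z => φ z - c * z) 𝕌 𝕌 := fun z (hz : 0 < z.im) => by
    show 0 < (φ z - c * z).im
    rw [hηim]
    exact sub_pos.mpr ((hcle z hz).lt_of_ne (hne z hz).symm)
  obtain ⟨ε, hε, hεle⟩ := exists_pos_mul_im_le hη hηmaps hF hreal fun z hz => by
    simp only [hηim, hFφ z hz]
    linarith [mul_nonneg hc0 (le_of_lt hz)]
  have : c + ε ≤ c := le_ciInf fun z => by
    rw [le_div_iff₀ z.2]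
    linarith [hεle z z.2, hηim z]
  linarith

theorem exists_im_eq_mul_im_and_deriv_eq {φ F : ℂ → ℂ} (hφ : DifferentiableOn ℂ φ 𝕌)
    (hmaps : MapsTo φ 𝕌 𝕌) (hF : ContinuousOn F {z | 0 ≤ z.im})
    (hreal : ∀ x : ℝ, (F x).im = 0) (hFφ : ∀ z ∈ 𝕌, (F z).im = (φ z).im) :
    ∃ c : ℝ, ∀ z ∈ 𝕌, (φ z).im = c * z.im ∧ deriv φ z = c := by
  obtain ⟨c, hcle, z₁, hz₁, hz₁c⟩ := exists_mul_im_le_and_eq hφ hmaps hF hreal hFφ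
  have hUopen : IsOpen 𝕌 := isOpen_lt continuous_const continuous_im
  have hUconn : IsPreconnected 𝕌 := (convex_halfSpace_im_gt 0).isPreconnected
  set η := fun z => φ z - c * z
  have hη : DifferentiableOn ℂ η 𝕌 := hφ.sub (by fun_prop)
  have hηim : ∀ z, (η z).im = (φ z).im - c * z.im := fun z => by simp [η]
  have hmin : IsMinOn (fun z => (η z).im) 𝕌 z₁ := fun z hz => by
    show (η z₁).im ≤ (η z).im
    linarith [hcle z hz, hηim z, hηim z₁]
  have hderiv : EqOn (deriv η) 0 𝕌 := fun z hz =>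
    deriv_eq_zero_of_isMinOn_im hUopen hUconn hη hz₁ hmin hz
  refine ⟨c, fun z hz => ⟨?_, ?_⟩⟩
  · have := congrArg im (hUopen.is_const_of_deriv_eq_zero hUconn hη hderiv hz hz₁)
    rw [hηim, hηim, hz₁c] at this
    linarith
  · have hd : HasDerivAt η (deriv φ z - c * 1) z :=
      (hφ.differentiableAt (hUopen.mem_nhds hz)).hasDerivAt.sub ((hasDerivAt_id z).const_mul _)
    have := hderiv hz
    rw [hd.deriv, mul_one, Pi.zero_apply, sub_eq_zero] at this
    exact this

theorem re_pos_of_norm_lt_norm_add_ofReal {w : ℂ} {c : ℝ} (hc : 0 < c) (h : ‖w‖ < ‖w + c‖) :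
    0 < (2 * w + c).re := by
  have h2 := pow_lt_pow_left₀ h (norm_nonneg _) two_ne_zero
  simp only [Complex.sq_norm, normSq_apply, add_re, add_im, ofReal_re, ofReal_im, add_zero] at h2
  have : 0 < c * (2 * w.re + c) := by nlinarith
  simpa using pos_of_mul_pos_right this hc.le

theorem harmonic_diffeo_halfplane_structure_general
    (U : Set ℂ) (hU : U = {z : ℂ | 0 < z.im})
    (h g f F : ℂ → ℂ)
    (hh : DifferentiableOn ℂ h U) (hg : DifferentiableOn ℂ g U)
    (hf : ∀ z ∈ U, f z = h z + (starRingEnd ℂ) (g z))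
    (hsense : ∀ z ∈ U, ‖deriv g z‖ < ‖deriv h z‖)
    (hbij : Set.BijOn f U U)
    (hFcont : ContinuousOn F {z : ℂ | 0 ≤ z.im})
    (hFeq : Set.EqOn F f U)
    (hFreal : ∀ x : ℝ, (F (x : ℂ)).im = 0)
    (b : ℂ) (hb : b ∈ U) (hfi : f Complex.I = b) :
    (∀ z ∈ U, (f z).im = b.im * z.im) ∧
      ∃ a : ℂ → ℂ, DifferentiableOn ℂ a U ∧ (∀ z ∈ U, 0 < (a z).re) ∧
        ∀ z ∈ U, deriv h z = (a z + (b.im : ℂ)) / 2 ∧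
          deriv g z = (a z - (b.im : ℂ)) / 2 := by
  subst hU
  have hUopen : IsOpen 𝕌 := isOpen_lt continuous_const continuous_im
  have him : ∀ z ∈ 𝕌, ((h - g) z).im = (f z).im := fun z hz => by
    simp [hf z hz, sub_eq_add_neg]
  have hmaps : MapsTo (h - g) 𝕌 𝕌 := fun z hz =>
    show 0 < ((h - g) z).im from (him z hz).symm ▸ hbij.mapsTo hz
  obtain ⟨c, hc⟩ := exists_im_eq_mul_im_and_deriv_eq (hh.sub hg) hmaps hFcont hFreal
    fun z hz => by rw [hFeq hz, him z hz]
  have hderiv : ∀ z ∈ 𝕌, deriv h z = deriv g z + c := fun z hz => by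
    have := (hc z hz).2
    rw [deriv_sub (hh.differentiableAt (hUopen.mem_nhds hz))
      (hg.differentiableAt (hUopen.mem_nhds hz))] at this
    linear_combination this
  have hcb : c = b.im := by simpa [← hfi, ← him I (by simp)] using ((hc I (by simp)).1).symm
  subst hcb
  refine ⟨fun z hz => by rw [← him z hz, (hc z hz).1], fun z => deriv h z + deriv g z,
    (hh.analyticOnNhd hUopen).deriv.differentiableOn.add
      (hg.analyticOnNhd hUopen).deriv.differentiableOn,
    fun z hz => ?_, fun z hz => ⟨?_, ?_⟩⟩
  · have := re_pos_of_norm_lt_norm_add_ofReal hb (hderiv z hz ▸ hsense z hz)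
    dsimp only
    rw [hderiv z hz]
    convert this using 2
    ring
  all_goals dsimp only; rw [hderiv z hz]; ring

/-- Structure theorem: a sense-preserving harmonic diffeomorphism
`f = h + conj g` of the upper half-plane onto itself with `f i = b`, extending
continuously to the closed half-plane with real boundary values, satisfies
`Im f(z) = (Im b)·Im z`, and there is a holomorphic `a` with values in the
right half-plane such that `h' = (a + Im b)/2` and `g' = (a − Im b)/2`. -/
theorem harmonic_diffeo_halfplane_structure
    (U : Set ℂ) (hU : U = {z : ℂ | 0 < z.im})
    (h g f finv F : ℂ → ℂ)
    (hh : DifferentiableOn ℂ h U) (hg : DifferentiableOn ℂ g U)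
    (hf : ∀ z ∈ U, f z = h z + (starRingEnd ℂ) (g z))
    (hsense : ∀ z ∈ U, ‖deriv g z‖ < ‖deriv h z‖)
    (hbij : Set.BijOn f U U)
    (hinv : Set.InvOn finv f U U) (hinvc : ContinuousOn finv U)
    (hFcont : ContinuousOn F {z : ℂ | 0 ≤ z.im})
    (hFeq : Set.EqOn F f U)
    (hFreal : ∀ x : ℝ, (F (x : ℂ)).im = 0)
    (b : ℂ) (hb : b ∈ U) (hfi : f Complex.I = b) :
    (∀ z ∈ U, (f z).im = b.im * z.im) ∧
      ∃ a : ℂ → ℂ, DifferentiableOn ℂ a U ∧ (∀ z ∈ U, 0 < (a z).re) ∧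
        ∀ z ∈ U, deriv h z = (a z + (b.im : ℂ)) / 2 ∧
          deriv g z = (a z - (b.im : ℂ)) / 2 :=
  harmonic_diffeo_halfplane_structure_general U hU h g f F hh hg hf hsense hbij hFcont hFeq hFreal b
    hb hfi
end

section
/- Let h, g be holomorphic on the upper half-plane U with h' nowhere zero, ω = g'/h' satisfying |ω| < 1, and suppose ω = q² for a holomorphic q. Then the Gauss curvature K = −|ω'|²/(|h' g'|(1 + |ω|)⁴) of the associated minimal graph satisfies |K(z)| ≤ 1/((Im z)²·(|h'(z)| + |g'(z)|)²) for every z ∈ U. -/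
set_option autoImplicit false
open Complex Set

/-!
Conjugating by the Cayley map `ζ ↦ (z - z̄ζ)/(1 - ζ)` and a disc automorphism, the Schwarz lemma
becomes the Schwarz–Pick inequality `2 Im z |q'(z)| ≤ 1 - |q(z)|²` for holomorphic
`q : U → 𝔻`. Since `|ω| = |q|²`, `|ω'| = 2|q||q'|` and `|g'| = |q|²|h'|`, the curvature is
`|K| = 4|q'|² / (|h'|²(1 + |q|²)⁴)`, so the claim is `4 (Im z)² |q'|² ≤ (1 + |q|²)²`, which is
weaker than Schwarz–Pick.
-/

open Metric ComplexConjugate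

section DiskMoebius

noncomputable def diskMoebius (a w : ℂ) : ℂ := (w - a) / (1 - conj a * w)

theorem norm_sub_sq_add_eq_norm_one_sub_conj_mul_sq (a w : ℂ) :
    ‖w - a‖ ^ 2 + (1 - ‖a‖ ^ 2) * (1 - ‖w‖ ^ 2) = ‖1 - conj a * w‖ ^ 2 := by
  simp only [Complex.sq_norm, normSq_apply, sub_re, sub_im, mul_re, mul_im, conj_re, conj_im, one_re,
    one_im]
  ring

variable {a w : ℂ}

theorem norm_sub_lt_norm_one_sub_conj_mul (ha : ‖a‖ < 1) (hw : ‖w‖ < 1) :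
    ‖w - a‖ < ‖1 - conj a * w‖ := by
  have hpos : 0 < (1 - ‖a‖ ^ 2) * (1 - ‖w‖ ^ 2) := by
    have := norm_nonneg a; have := norm_nonneg w
    apply mul_pos <;> nlinarith
  refine lt_of_pow_lt_pow_left₀ 2 (norm_nonneg _) ?_
  linarith [norm_sub_sq_add_eq_norm_one_sub_conj_mul_sq a w]

theorem norm_diskMoebius_lt_one (ha : ‖a‖ < 1) (hw : ‖w‖ < 1) : ‖diskMoebius a w‖ < 1 := by
  have hlt := norm_sub_lt_norm_one_sub_conj_mul ha hw
  rw [diskMoebius, norm_div, div_lt_one ((norm_nonneg _).trans_lt hlt)]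
  exact hlt

theorem one_sub_conj_mul_ne_zero (ha : ‖a‖ < 1) (hw : ‖w‖ < 1) : 1 - conj a * w ≠ 0 :=
  norm_pos_iff.mp ((norm_nonneg _).trans_lt (norm_sub_lt_norm_one_sub_conj_mul ha hw))

theorem diskMoebius_self (a : ℂ) : diskMoebius a a = 0 := by
  simp [diskMoebius]

theorem differentiableAt_diskMoebius (ha : ‖a‖ < 1) (hw : ‖w‖ < 1) :
    DifferentiableAt ℂ (diskMoebius a) w :=
  (differentiableAt_id.sub_const a).div ((differentiableAt_id.const_mul _).const_sub 1)
    (one_sub_conj_mul_ne_zero ha hw)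

theorem hasDerivAt_diskMoebius_self (ha : ‖a‖ < 1) :
    HasDerivAt (diskMoebius a) (((1 - ‖a‖ ^ 2)⁻¹ : ℝ) : ℂ) a := by
  have hne := one_sub_conj_mul_ne_zero ha ha
  have hquot : HasDerivAt (diskMoebius a)
      ((1 * (1 - conj a * a) - (a - a) * -(conj a * 1)) / (1 - conj a * a) ^ 2) a :=
    ((hasDerivAt_id' a).sub_const a).div (((hasDerivAt_id' a).const_mul (conj a)).const_sub 1) hne
  refine hquot.congr_deriv ?_
  have hconj : conj a * a = ((‖a‖ ^ 2 : ℝ) : ℂ) := by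
    rw [mul_comm, mul_conj']; push_cast; ring
  rw [hconj] at hne ⊢
  push_cast at hne ⊢
  field_simp
  ring

end DiskMoebius

theorem norm_deriv_le_one_sub_sq_of_mapsTo_ball {F : ℂ → ℂ}
    (hd : DifferentiableOn ℂ F (ball 0 1)) (hF : MapsTo F (ball 0 1) (ball 0 1)) :
    ‖deriv F 0‖ ≤ 1 - ‖F 0‖ ^ 2 := by
  have hF0 : ‖F 0‖ < 1 := mem_ball_zero_iff.mp (hF (mem_ball_self one_pos))
  have hmaps : MapsTo (diskMoebius (F 0) ∘ F) (ball 0 1) (closedBall 0 1) := fun ζ hζ => by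
    simpa using (norm_diskMoebius_lt_one hF0 (mem_ball_zero_iff.mp (hF hζ))).le
  have hdiff : DifferentiableOn ℂ (diskMoebius (F 0) ∘ F) (ball 0 1) := fun ζ hζ =>
    ((differentiableAt_diskMoebius hF0 (mem_ball_zero_iff.mp (hF hζ))).comp ζ
      ((hd ζ hζ).differentiableAt (isOpen_ball.mem_nhds hζ))).differentiableWithinAt
  have hschwarz := norm_deriv_le_one_of_mapsTo_ball hdiff
    (by simpa [diskMoebius_self] using hmaps) one_pos
  have hF' : HasDerivAt F (deriv F 0) 0 :=
    ((hd 0 (mem_ball_self one_pos)).differentiableAt (ball_mem_nhds 0 one_pos)).hasDerivAt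
  have hpos : 0 < 1 - ‖F 0‖ ^ 2 := by nlinarith [norm_nonneg (F 0)]
  rw [((hasDerivAt_diskMoebius_self hF0).comp 0 hF').deriv, norm_mul, norm_real,
    Real.norm_of_nonneg (inv_nonneg.mpr hpos.le), inv_mul_le_iff₀ hpos, mul_one] at hschwarz
  exact hschwarz

section HalfPlaneCayley

noncomputable def halfPlaneCayley (z₀ ζ : ℂ) : ℂ := (z₀ - conj z₀ * ζ) / (1 - ζ)

variable {z₀ ζ : ℂ}

theorem one_sub_ne_zero_of_norm_lt_one (hζ : ‖ζ‖ < 1) : 1 - ζ ≠ 0 := by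
  rw [sub_ne_zero]
  rintro rfl
  simp at hζ

theorem im_halfPlaneCayley_pos (hz₀ : 0 < z₀.im) (hζ : ‖ζ‖ < 1) :
    0 < (halfPlaneCayley z₀ ζ).im := by
  have hns : 0 < normSq (1 - ζ) := normSq_pos.mpr (one_sub_ne_zero_of_norm_lt_one hζ)
  have hζ2 : ζ.re ^ 2 + ζ.im ^ 2 < 1 := by
    have := Complex.sq_norm ζ
    rw [normSq_apply] at this
    nlinarith [norm_nonneg ζ]
  rw [halfPlaneCayley, div_im, div_sub_div_same]
  refine div_pos ?_ hns
  simp only [sub_re, sub_im, mul_re, mul_im, conj_re, conj_im, one_re, one_im]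
  nlinarith

theorem differentiableAt_halfPlaneCayley (hζ : ‖ζ‖ < 1) :
    DifferentiableAt ℂ (halfPlaneCayley z₀) ζ :=
  ((differentiableAt_id.const_mul _).const_sub z₀).div (differentiableAt_id.const_sub 1)
    (one_sub_ne_zero_of_norm_lt_one hζ)

theorem halfPlaneCayley_zero (z₀ : ℂ) : halfPlaneCayley z₀ 0 = z₀ := by
  simp [halfPlaneCayley]

theorem hasDerivAt_halfPlaneCayley_zero (z₀ : ℂ) :
    HasDerivAt (halfPlaneCayley z₀) (z₀ - conj z₀) 0 := by
  have hquot : HasDerivAt (halfPlaneCayley z₀)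
      ((-(conj z₀ * 1) * (1 - 0) - (z₀ - conj z₀ * 0) * -1) / (1 - 0) ^ 2) 0 :=
    (((hasDerivAt_id' (0 : ℂ)).const_mul (conj z₀)).const_sub z₀).div
      ((hasDerivAt_id' (0 : ℂ)).const_sub 1) (by norm_num)
  refine hquot.congr_deriv ?_
  ring

end HalfPlaneCayley

/-- The Schwarz–Pick inequality on the upper half-plane, whose hyperbolic density is
`1 / (2 Im z)`. -/
theorem two_mul_im_mul_norm_deriv_le_of_mapsTo_ball {q : ℂ → ℂ}
    (hq : DifferentiableOn ℂ q {z | 0 < z.im}) (hq1 : MapsTo q {z | 0 < z.im} (ball 0 1))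
    {z : ℂ} (hz : 0 < z.im) :
    2 * z.im * ‖deriv q z‖ ≤ 1 - ‖q z‖ ^ 2 := by
  have hU : IsOpen {z : ℂ | 0 < z.im} := isOpen_lt continuous_const continuous_im
  have hcayley : MapsTo (halfPlaneCayley z) (ball 0 1) {z | 0 < z.im} := fun ζ hζ =>
    im_halfPlaneCayley_pos hz (mem_ball_zero_iff.mp hζ)
  have hdiff : DifferentiableOn ℂ (q ∘ halfPlaneCayley z) (ball 0 1) := fun ζ hζ =>
    (((hq _ (hcayley hζ)).differentiableAt (hU.mem_nhds (hcayley hζ))).comp ζ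
      (differentiableAt_halfPlaneCayley (mem_ball_zero_iff.mp hζ))).differentiableWithinAt
  have hq' : HasDerivAt q (deriv q z) (halfPlaneCayley z 0) := by
    rw [halfPlaneCayley_zero]
    exact ((hq z hz).differentiableAt (hU.mem_nhds hz)).hasDerivAt
  have hpick := norm_deriv_le_one_sub_sq_of_mapsTo_ball hdiff (hq1.comp hcayley)
  rw [(hq'.comp 0 (hasDerivAt_halfPlaneCayley_zero z)).deriv, Function.comp_apply,
    halfPlaneCayley_zero, norm_mul, sub_conj, norm_mul, norm_I, mul_one, norm_real,
    Real.norm_of_nonneg (by positivity)] at hpick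
  linarith

/-- The curvature estimate in terms of `t = |q|`, `s = |q'|`, `a = |h'|` and `y = Im z`. -/
theorem curvature_le_of_two_mul_le_one_add_sq {t s a y : ℝ} (ht : 0 ≤ t) (hs : 0 ≤ s)
    (ha : 0 < a) (hy : 0 < y) (hst : 2 * y * s ≤ 1 + t ^ 2) :
    (2 * t * s) ^ 2 / (a * (t ^ 2 * a) * (1 + t ^ 2) ^ 4) ≤ 1 / (y ^ 2 * (a + t ^ 2 * a) ^ 2) := by
  rcases ht.eq_or_lt with rfl | htpos
  · simp only [mul_zero, zero_mul, ne_eq, OfNat.ofNat_ne_zero, not_false_eq_true, zero_pow,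
      zero_div]
    positivity
  have hsq : (2 * y * s) ^ 2 ≤ (1 + t ^ 2) ^ 2 := by
    have : 0 ≤ 2 * y * s := by positivity
    gcongr
  rw [div_le_div_iff₀ (by positivity) (by positivity)]
  nlinarith [mul_le_mul_of_nonneg_right hsq
    (by positivity : (0:ℝ) ≤ t ^ 2 * a ^ 2 * (1 + t ^ 2) ^ 2)]

theorem curvature_bound_halfplane_general
    (U : Set ℂ) (hU : U = {z : ℂ | 0 < z.im})
    (h g q : ℂ → ℂ) (ω : ℂ → ℂ)
    (hh0 : ∀ z ∈ U, deriv h z ≠ 0)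
    (hω : ∀ z ∈ U, ω z = deriv g z / deriv h z)
    (hω1 : ∀ z ∈ U, ‖ω z‖ < 1)
    (hqdiff : DifferentiableOn ℂ q U)
    (hqsq : ∀ z ∈ U, q z ^ 2 = ω z)
    (K : ℂ → ℝ)
    (hK : ∀ z ∈ U, K z = -(‖deriv ω z‖ ^ 2) /
      (‖deriv h z * deriv g z‖ * (1 + ‖ω z‖) ^ 4)) :
    ∀ z ∈ U, |K z| ≤ 1 / (z.im ^ 2 * (‖deriv h z‖ + ‖deriv g z‖) ^ 2) := by
  subst hU
  intro z hz
  have hq1 : MapsTo q {z | 0 < z.im} (ball 0 1) := fun w hw => by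
    have := hω1 w hw
    rw [← hqsq w hw, norm_pow, pow_lt_one_iff_of_nonneg (norm_nonneg _) two_ne_zero] at this
    exact mem_ball_zero_iff.mpr this
  have hpick := two_mul_im_mul_norm_deriv_le_of_mapsTo_ball hqdiff hq1 hz
  have hUz : {z : ℂ | 0 < z.im} ∈ nhds z := (isOpen_lt continuous_const continuous_im).mem_nhds hz
  have hderivω : deriv ω z = 2 * q z * deriv q z := by
    rw [(Filter.eventuallyEq_of_mem hUz fun w hw => (hqsq w hw).symm).deriv_eq,
      ((hqdiff.differentiableAt hUz).hasDerivAt.fun_pow 2).deriv]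
    ring
  have hgh : deriv g z = q z ^ 2 * deriv h z := by
    rw [hqsq z hz, hω z hz, div_mul_cancel₀ _ (hh0 z hz)]
  rw [hK z hz, hderivω, hgh, ← hqsq z hz, neg_div, abs_neg,
    abs_of_nonneg (by positivity)]
  simp only [norm_mul, norm_pow, Complex.norm_ofNat]
  exact curvature_le_of_two_mul_le_one_add_sq (norm_nonneg _) (norm_nonneg _)
    (norm_pos_iff.mpr (hh0 z hz)) hz (hpick.trans (by linarith [sq_nonneg ‖q z‖]))

/-- Curvature bound on the upper half-plane in terms of the underlying harmonic
map `f = h + conj g`: with `ω = g'/h'`, `|ω| < 1`, `ω = q²`, the Gauss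
curvature `K = −|ω'|²/(|h'g'|(1+|ω|)⁴)` satisfies
`|K(z)| ≤ 1/((Im z)²(|h'(z)|+|g'(z)|)²)`. -/
theorem curvature_bound_halfplane
    (U : Set ℂ) (hU : U = {z : ℂ | 0 < z.im})
    (h g q : ℂ → ℂ) (ω : ℂ → ℂ)
    (hh : DifferentiableOn ℂ h U) (hg : DifferentiableOn ℂ g U)
    (hh0 : ∀ z ∈ U, deriv h z ≠ 0)
    (hω : ∀ z ∈ U, ω z = deriv g z / deriv h z)
    (hω1 : ∀ z ∈ U, ‖ω z‖ < 1)
    (hqdiff : DifferentiableOn ℂ q U)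
    (hqsq : ∀ z ∈ U, q z ^ 2 = ω z)
    (K : ℂ → ℝ)
    (hK : ∀ z ∈ U, K z = -(‖deriv ω z‖ ^ 2) /
      (‖deriv h z * deriv g z‖ * (1 + ‖ω z‖) ^ 4)) :
    ∀ z ∈ U, |K z| ≤ 1 / (z.im ^ 2 * (‖deriv h z‖ + ‖deriv g z‖) ^ 2) :=
  curvature_bound_halfplane_general U hU h g q ω hh0 hω hω1 hqdiff hqsq K hK
end

section
/- Let m(z) = (1 + iπ + z² − 2 Log z)/(4i), h = (m + z)/2, g = (m − z)/2 on the upper half-plane U. Then the harmonic map f = h + conj(g) satisfies f(x + iy) = (1/2)(xy + arctan(x/y)) + iy for z = x + iy ∈ U, and f maps U bijectively onto U. -/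
set_option autoImplicit false
open Complex Set

/-!
Since `h + conj g = Re m + i Im z`, the map `f` fixes the imaginary part. Its real part is
`Re m(x + iy) = (xy + π/2 - arg z) / 2`, and `π/2 - arg z = arctan (x/y)` on the upper half-plane.
On each horizontal line `Im z = y > 0`, `f` is therefore a continuous strictly increasing function
of `x` tending to `±∞`, hence a bijection of that line.
-/

theorem Complex.arctan_re_div_im {z : ℂ} (hz : 0 < z.im) :
    Real.arctan (z.re / z.im) = Real.pi / 2 - arg z := by
  have hz0 : z ≠ 0 := fun h => by simp [h] at hz
  have harg_pos : 0 < arg z :=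
    (arg_nonneg_iff.2 hz.le).lt_of_ne fun h => by
      linarith [(arg_eq_zero_iff.1 h.symm).2]
  have harg_lt : arg z < Real.pi := arg_lt_pi_iff.2 (Or.inr hz.ne')
  have htan : Real.tan (Real.pi / 2 - arg z) = z.re / z.im := by
    have : ‖z‖ ≠ 0 := norm_ne_zero_iff.2 hz0
    rw [Real.tan_pi_div_two_sub, Real.tan_eq_sin_div_cos, inv_div, cos_arg hz0, sin_arg]
    field_simp
  rw [← htan, Real.arctan_tan (by linarith) (by linarith)]

theorem Complex.half_add_add_conj_half_sub (m z : ℂ) :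
    (m + z) / 2 + starRingEnd ℂ ((m - z) / 2) = m.re + z.im * I :=
  calc (m + z) / 2 + starRingEnd ℂ ((m - z) / 2)
      = (m + starRingEnd ℂ m) / 2 + (z - starRingEnd ℂ z) / 2 := by
        rw [map_div₀, map_sub, map_ofNat]; ring
    _ = m.re + z.im * I := by rw [add_conj, sub_conj]; push_cast; ring

theorem Complex.bijOn_of_bijective_on_horizontal_lines {S : Set ℝ} (φ : ℝ → ℝ → ℝ)
    (hφ : ∀ y ∈ S, Function.Bijective (φ y)) :
    BijOn (fun z : ℂ => (φ z.im z.re : ℂ) + z.im * I) {z | z.im ∈ S} {z | z.im ∈ S} := by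
  refine ⟨fun z hz => by simpa using hz, fun z _ w hw hzw => ?_, fun w hw => ?_⟩
  · have him : z.im = w.im := by simpa using congrArg im hzw
    have hre : φ z.im z.re = φ w.im w.re := by simpa using congrArg re hzw
    rw [him] at hre
    exact Complex.ext ((hφ _ hw).injective hre) him
  · obtain ⟨x, hx⟩ := (hφ _ hw).surjective w.re
    exact ⟨⟨x, w.im⟩, hw, Complex.ext (by simpa using hx) (by simp)⟩

noncomputable def extremalM (z : ℂ) : ℂ := (1 + I * Real.pi + z ^ 2 - 2 * log z) / (4 * I)

noncomputable def extremalMapRe (y x : ℝ) : ℝ := 1 / 2 * (x * y + Real.arctan (x / y))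

theorem re_extremalM {z : ℂ} (hz : 0 < z.im) : (extremalM z).re = extremalMapRe z.im z.re := by
  rw [extremalM, extremalMapRe, Complex.arctan_re_div_im hz]
  simp only [pow_two, div_re, sub_re, add_re, one_re, mul_re, I_re, ofReal_re, zero_mul, I_im,
    ofReal_im, mul_zero, sub_self, add_zero, re_ofNat, im_ofNat, log_im, sub_zero, mul_one, normSq,
    MonoidWithZeroHom.coe_mk, ZeroHom.coe_mk, mul_im, zero_add, zero_div, sub_im, add_im, one_im,
    one_mul, one_div]
  ring

theorem continuous_extremalMapRe (y : ℝ) : Continuous (extremalMapRe y) := by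
  unfold extremalMapRe; fun_prop

theorem strictMono_extremalMapRe {y : ℝ} (hy : 0 < y) : StrictMono (extremalMapRe y) := by
  intro a b hab
  have h1 : a * y < b * y := mul_lt_mul_of_pos_right hab hy
  have h2 : Real.arctan (a / y) < Real.arctan (b / y) :=
    Real.arctan_strictMono (div_lt_div_of_pos_right hab hy)
  unfold extremalMapRe; linarith

theorem surjective_extremalMapRe {y : ℝ} (hy : 0 < y) :
    Function.Surjective (extremalMapRe y) := by
  refine (continuous_extremalMapRe y).surjective ?_ ?_
  · refine (Filter.tendsto_atTop_add_right_of_le' _ (-(Real.pi / 2)) ?_ ?_).const_mul_atTop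
      one_half_pos
    · exact Filter.tendsto_id.atTop_mul_const hy
    · exact Filter.Eventually.of_forall fun x => (Real.neg_pi_div_two_lt_arctan _).le
  · refine (Filter.tendsto_atBot_add_right_of_ge' _ (Real.pi / 2) ?_ ?_).const_mul_atBot
      one_half_pos
    · exact Filter.tendsto_id.atBot_mul_const hy
    · exact Filter.Eventually.of_forall fun x => (Real.arctan_lt_pi_div_two _).le

theorem bijective_extremalMapRe {y : ℝ} (hy : 0 < y) : Function.Bijective (extremalMapRe y) :=
  ⟨(strictMono_extremalMapRe hy).injective, surjective_extremalMapRe hy⟩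

/-- The harmonic map `f = h + conj g` built from
`m(z) = (1 + iπ + z² − 2 Log z)/(4i)` satisfies
`f(x+iy) = (1/2)(xy + arctan(x/y)) + iy` on the upper half-plane, and maps the
upper half-plane bijectively onto itself. -/
theorem extremal_map_formula_and_bijectivity
    (U : Set ℂ) (hU : U = {z : ℂ | 0 < z.im})
    (m h g f : ℂ → ℂ)
    (hm : ∀ z : ℂ, m z =
      (1 + Complex.I * Real.pi + z ^ 2 - 2 * Complex.log z) / (4 * Complex.I))
    (hh : ∀ z : ℂ, h z = (m z + z) / 2)
    (hg : ∀ z : ℂ, g z = (m z - z) / 2)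
    (hf : ∀ z : ℂ, f z = h z + (starRingEnd ℂ) (g z)) :
    (∀ x y : ℝ, 0 < y →
      f ((x : ℂ) + (y : ℂ) * Complex.I) =
        (((1 / 2) * (x * y + Real.arctan (x / y)) : ℝ) : ℂ) +
          (y : ℂ) * Complex.I) ∧
      Set.BijOn f U U := by
  obtain rfl : m = extremalM := funext hm
  have hfz : ∀ z : ℂ, 0 < z.im → f z = extremalMapRe z.im z.re + z.im * I := fun z hz => by
    rw [hf, hh, hg, half_add_add_conj_half_sub, re_extremalM hz]
  refine ⟨fun x y hy => by simpa [extremalMapRe] using hfz (x + y * I) (by simpa), ?_⟩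
  subst hU
  exact (bijOn_of_bijective_on_horizontal_lines extremalMapRe
    fun y hy => bijective_extremalMapRe hy).congr fun z hz => (hfz z hz).symm
end
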